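/- Let n ≥ 2 and let f be the rotation map f(x) = (x₁ cos θ − x₂ sin θ, x₂ cos θ + x₁ sin θ, x₃, …, xₙ) with θ = log(x₁² + x₂²). Then at every point x with x₁² + x₂² > 0, f is differentiable and its Jacobian determinant equals 1, i.e. det f′(x) = 1 (f preserves volume). -/

import Mathlib

/-!
Writing `z = x₁ + i x₂`, `f` is the planar map `g(z) = e^{iθ(z)} z`, `θ(z) = log ‖z‖²`, extended
by the identity on the other coordinates, so `J_f(x) = J_g(z)` by `det (1 + AB) = det (1 + BA)`.
The differential of `g` is `e^{iθ} · (id + (iz) ⊗ dθ)`: a rotation, of determinant `1`, composed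
with a rank-one perturbation of the identity, of determinant `1 + dθ(iz)` by the same identity.
Finally `dθ(iz) = 0` because `θ` only depends on `‖z‖`, which is constant along the rotation
direction `iz`.
-/

open Metric

/-- The rotation map
`f(x) = (x₁ cos θ − x₂ sin θ, x₂ cos θ + x₁ sin θ, x₃, …, xₙ)` with
`θ = log (x₁² + x₂²)`. -/
noncomputable def rotMap (n : ℕ) (hn : 2 ≤ n)
    (x : EuclideanSpace ℝ (Fin n)) : EuclideanSpace ℝ (Fin n) :=
  (WithLp.equiv 2 (Fin n → ℝ)).symm fun i =>
    let θ : ℝ := Real.log (x ⟨0, by omega⟩ ^ 2 + x ⟨1, by omega⟩ ^ 2)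
    if (i : ℕ) = 0 then
      x ⟨0, by omega⟩ * Real.cos θ - x ⟨1, by omega⟩ * Real.sin θ
    else if (i : ℕ) = 1 then
      x ⟨1, by omega⟩ * Real.cos θ + x ⟨0, by omega⟩ * Real.sin θ
    else x i

open Complex

namespace LinearMap

variable {K E F : Type*} [Field K] [AddCommGroup E] [Module K E] [FiniteDimensional K E]
  [AddCommGroup F] [Module K F] [FiniteDimensional K F]

theorem det_id_add_comp_comm (f : E →ₗ[K] F) (g : F →ₗ[K] E) :
    LinearMap.det (id + g ∘ₗ f) = LinearMap.det (id + f ∘ₗ g) := by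
  let bE := Module.finBasis K E
  let bF := Module.finBasis K F
  rw [← det_toMatrix bE, ← det_toMatrix bF, map_add, map_add, toMatrix_id, toMatrix_id,
    toMatrix_comp bE bF bE, toMatrix_comp bF bE bF, Matrix.det_one_add_mul_comm]

theorem det_id_add_smulRight (φ : E →ₗ[K] K) (v : E) :
    LinearMap.det (id + φ.smulRight v) = 1 + φ v := by
  have : φ.smulRight v = toSpanSingleton K E v ∘ₗ φ := by ext; simp
  rw [this, det_id_add_comp_comm, det_ring]
  simp

theorem det_id_add_comp_sub_id_comp {π : E →ₗ[K] F} {ι : F →ₗ[K] E} (h : π ∘ₗ ι = id)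
    (T : F →ₗ[K] F) : LinearMap.det (id + ι ∘ₗ (T - id) ∘ₗ π) = LinearMap.det T := by
  rw [← comp_assoc, det_id_add_comp_comm, ← comp_assoc, h, id_comp, add_sub_cancel]

end LinearMap

noncomputable def logSpiral (z : ℂ) : ℂ := Circle.exp (Real.log (‖z‖ ^ 2)) * z

theorem logSpiral_re (z : ℂ) :
    (logSpiral z).re =
      z.re * Real.cos (Real.log (‖z‖ ^ 2)) - z.im * Real.sin (Real.log (‖z‖ ^ 2)) := by
  rw [logSpiral, Circle.coe_exp, mul_re, exp_ofReal_mul_I_re, exp_ofReal_mul_I_im]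
  ring

theorem logSpiral_im (z : ℂ) :
    (logSpiral z).im =
      z.im * Real.cos (Real.log (‖z‖ ^ 2)) + z.re * Real.sin (Real.log (‖z‖ ^ 2)) := by
  rw [logSpiral, Circle.coe_exp, mul_im, exp_ofReal_mul_I_re, exp_ofReal_mul_I_im]
  ring

theorem inner_I_mul_eq_zero (z : ℂ) : inner ℝ z (I * z) = 0 := by
  rw [Complex.inner, mul_assoc, mul_conj]
  simp

theorem hasFDerivAt_logSpiral {z : ℂ} (hz : z ≠ 0) :
    HasFDerivAt logSpiral
      ((rotation (Circle.exp (Real.log (‖z‖ ^ 2)))).toContinuousLinearEquiv.toContinuousLinearMap ∘L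
        (.id ℝ ℂ + ((‖z‖ ^ 2)⁻¹ • (2 • innerSL ℝ z)).smulRight (I * z))) z := by
  have hθ : HasFDerivAt (fun w : ℂ => Real.log (‖w‖ ^ 2)) ((‖z‖ ^ 2)⁻¹ • (2 • innerSL ℝ z)) z :=
    (hasStrictFDerivAt_norm_sq z).hasFDerivAt.log (by positivity)
  have hexp (t : ℝ) : HasDerivAt (fun t : ℝ => (Circle.exp t : ℂ)) (Circle.exp t * I) t := by
    simpa [Circle.coe_exp] using ((hasDerivAt_id (t : ℂ)).mul_const I).cexp.comp_ofReal
  refine (((hexp _).hasFDerivAt.comp z hθ).mul (hasFDerivAt_id z)).congr_fderiv ?_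
  ext w
  simp only [ContinuousLinearMap.comp_apply, add_apply, smul_apply, ContinuousLinearMap.id_apply,
    ContinuousLinearMap.smulRight_apply, ContinuousLinearMap.toSpanSingleton_apply,
    ContinuousLinearEquiv.coe_coe, LinearIsometryEquiv.coe_toContinuousLinearEquiv, rotation_apply,
    Function.comp_apply, id_eq, real_smul, smul_eq_mul]
  ring

theorem det_fderiv_logSpiral {z : ℂ} (hz : z ≠ 0) :
    LinearMap.det (fderiv ℝ logSpiral z : ℂ →ₗ[ℝ] ℂ) = 1 := by
  rw [(hasFDerivAt_logSpiral hz).fderiv, ContinuousLinearMap.toLinearMap_comp, LinearMap.det_comp,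
    ContinuousLinearMap.toLinearMap_add, ContinuousLinearMap.coe_id]
  erw [det_rotation, LinearMap.det_id_add_smulRight]
  simp only [ContinuousLinearMap.coe_coe, smul_apply, innerSL_apply_apply, inner_I_mul_eq_zero,
    smul_zero, add_zero, mul_one]

section Plane

variable {ι : Type*}

noncomputable def planeProj (i j : ι) : EuclideanSpace ℝ ι →L[ℝ] ℂ :=
  equivRealProdCLM.symm.toContinuousLinearMap ∘L
    (EuclideanSpace.proj i).prod (EuclideanSpace.proj j)

@[simp]
theorem planeProj_apply (i j : ι) (x : EuclideanSpace ℝ ι) : planeProj i j x = ⟨x i, x j⟩ := by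
  simp [planeProj, equivRealProdCLM_symm_apply, Complex.ext_iff]

theorem sq_norm_planeProj (i j : ι) (x : EuclideanSpace ℝ ι) :
    ‖planeProj i j x‖ ^ 2 = x i ^ 2 + x j ^ 2 := by
  rw [planeProj_apply, Complex.sq_norm, normSq_mk]
  ring

variable [Fintype ι] [DecidableEq ι]

noncomputable def planeIncl (i j : ι) : ℂ →L[ℝ] EuclideanSpace ℝ ι :=
  reCLM.smulRight (EuclideanSpace.single i (1 : ℝ)) +
    imCLM.smulRight (EuclideanSpace.single j (1 : ℝ))

theorem planeProj_comp_planeIncl {i j : ι} (h : i ≠ j) :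
    planeProj i j ∘L planeIncl i j = .id ℝ ℂ := by
  refine ContinuousLinearMap.ext fun z => Complex.ext ?_ ?_ <;> simp [planeIncl, h, h.symm]

noncomputable def planeMap (i j : ι) (g : ℂ → ℂ) (x : EuclideanSpace ℝ ι) :
    EuclideanSpace ℝ ι :=
  x + planeIncl i j (g (planeProj i j x) - planeProj i j x)

theorem planeMap_apply_left {i j : ι} (h : i ≠ j) (g : ℂ → ℂ) (x : EuclideanSpace ℝ ι) :
    planeMap i j g x i = (g (planeProj i j x)).re := by
  simp [planeMap, planeIncl, h.symm]

theorem planeMap_apply_right {i j : ι} (h : i ≠ j) (g : ℂ → ℂ) (x : EuclideanSpace ℝ ι) :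
    planeMap i j g x j = (g (planeProj i j x)).im := by
  simp [planeMap, planeIncl, h]

theorem planeMap_apply_of_ne {i j k : ι} (hi : k ≠ i) (hj : k ≠ j) (g : ℂ → ℂ)
    (x : EuclideanSpace ℝ ι) : planeMap i j g x k = x k := by
  simp [planeMap, planeIncl, hi, hj]

theorem hasFDerivAt_planeMap {i j : ι} {g : ℂ → ℂ} {g' : ℂ →L[ℝ] ℂ} {x : EuclideanSpace ℝ ι}
    (hg : HasFDerivAt g g' (planeProj i j x)) :
    HasFDerivAt (planeMap i j g) (.id ℝ _ + planeIncl i j ∘L (g' - .id ℝ ℂ) ∘L planeProj i j) x :=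
  (hasFDerivAt_id x).add <| (planeIncl i j).hasFDerivAt.comp x <|
    ((hg.comp x (planeProj i j).hasFDerivAt).sub (planeProj i j).hasFDerivAt).congr_fderiv
      (by rw [ContinuousLinearMap.sub_comp, ContinuousLinearMap.id_comp])

theorem det_fderiv_planeMap {i j : ι} (h : i ≠ j) {g : ℂ → ℂ} {x : EuclideanSpace ℝ ι}
    (hg : DifferentiableAt ℝ g (planeProj i j x)) :
    LinearMap.det (fderiv ℝ (planeMap i j g) x : EuclideanSpace ℝ ι →ₗ[ℝ] EuclideanSpace ℝ ι) =
      LinearMap.det (fderiv ℝ g (planeProj i j x) : ℂ →ₗ[ℝ] ℂ) := by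
  rw [(hasFDerivAt_planeMap hg.hasFDerivAt).fderiv]
  exact LinearMap.det_id_add_comp_sub_id_comp
    (congrArg ContinuousLinearMap.toLinearMap (planeProj_comp_planeIncl h)) _

end Plane

theorem rotMap_eq_planeMap (n : ℕ) (hn : 2 ≤ n) :
    rotMap n hn = planeMap ⟨0, by omega⟩ ⟨1, by omega⟩ logSpiral := by
  have h01 : (⟨0, by omega⟩ : Fin n) ≠ ⟨1, by omega⟩ := by simp
  funext x
  ext k
  rcases k with ⟨_ | _ | k, hk⟩
  · rw [planeMap_apply_left h01, logSpiral_re, sq_norm_planeProj]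
    simp [rotMap]
  · rw [planeMap_apply_right h01, logSpiral_im, sq_norm_planeProj]
    simp [rotMap]
  · rw [planeMap_apply_of_ne (by simp) (by simp)]
    simp [rotMap]

theorem rotMap_volume_preserving (n : ℕ) (hn : 2 ≤ n)
    (x : EuclideanSpace ℝ (Fin n))
    (hx : 0 < x ⟨0, by omega⟩ ^ 2 + x ⟨1, by omega⟩ ^ 2) :
    DifferentiableAt ℝ (rotMap n hn) x ∧
    LinearMap.det ((fderiv ℝ (rotMap n hn) x :
      EuclideanSpace ℝ (Fin n) →ₗ[ℝ] EuclideanSpace ℝ (Fin n))) = 1 := by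
  have hz : planeProj (⟨0, by omega⟩ : Fin n) ⟨1, by omega⟩ x ≠ 0 := by
    rw [← norm_ne_zero_iff, ← sq_pos_iff, sq_norm_planeProj]
    exact hx
  have hg := (hasFDerivAt_logSpiral hz).differentiableAt
  rw [rotMap_eq_planeMap]
  refine ⟨(hasFDerivAt_planeMap hg.hasFDerivAt).differentiableAt, ?_⟩
  rw [det_fderiv_planeMap (by simp [Fin.ext_iff]) hg, det_fderiv_logSpiral hz]
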